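/- arXiv:2603.14020 — 2 statements merged into one kernel-verified Lean document; each statement's English description precedes it below -/
import Mathlib

section
/- Let δ be a linear map on a normed algebra such that for a fixed element A and constants V > 0 and m ∈ ℕ one has ‖δ^n(A)‖ ≤ 2^n · (m+n−1)!/(m−1)! · V^n · ‖A‖ for all n ≥ 0. Then for all real t with |t| < 1/(4V), the series Σ_{n≥0} (t^n/n!) ‖δ^n(A)‖ converges, and is bounded by 2^{m−1} ‖A‖ / (1 − 4|t|V). -/
open scoped BigOperators

lemma choose_le_two_pow' (n k : ℕ) : n.choose k ≤ 2 ^ n := by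
  rcases le_or_gt k n with h | h
  · calc n.choose k ≤ ∑ i ∈ Finset.range (n+1), n.choose i :=
        Finset.single_le_sum (fun _ _ => Nat.zero_le _) (Finset.mem_range.2 (by omega))
      _ = 2 ^ n := Nat.sum_range_choose n
  · simp [Nat.choose_eq_zero_of_lt h]

/-- Analyticity estimate: if a linear map `δ` on a normed algebra satisfies
`‖δⁿ(A)‖ ≤ 2ⁿ (m+n-1)!/(m-1)! Vⁿ ‖A‖`, then for `|t| < 1/(4V)` the series
`Σ (tⁿ/n!) ‖δⁿ(A)‖` converges and is bounded by `2^{m-1}‖A‖/(1-4|t|V)`. -/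
theorem stmt4 {𝒜 : Type*} [NormedRing 𝒜] [NormedAlgebra ℂ 𝒜]
    (δ : 𝒜 → 𝒜) (hlin : IsLinearMap ℂ δ) (A : 𝒜) (V : ℝ) (hV : 0 < V) (m : ℕ) (hm : 0 < m)
    (hbound : ∀ n : ℕ, ‖δ^[n] A‖ ≤ 2 ^ n * (((m + n - 1).factorial : ℝ) / ((m - 1).factorial : ℝ)) * V ^ n * ‖A‖)
    (t : ℝ) (ht : |t| < 1 / (4 * V)) :
    (Summable fun n : ℕ => |t| ^ n / ((n.factorial : ℝ)) * ‖δ^[n] A‖) ∧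
    (∑' n : ℕ, |t| ^ n / ((n.factorial : ℝ)) * ‖δ^[n] A‖)
      ≤ 2 ^ (m - 1) * ‖A‖ / (1 - 4 * |t| * V) := by
  set r : ℝ := 4 * |t| * V with hrdef
  have ht0 : (0:ℝ) ≤ |t| := abs_nonneg t
  have hr0 : 0 ≤ r := by positivity
  have hr1 : r < 1 := by
    have h4 : (0:ℝ) < 4 * V := by positivity
    have h' : |t| * (4 * V) < 1 := (lt_div_iff₀ h4).mp ht
    rw [hrdef]; nlinarith
  have key : ∀ n, |t| ^ n / (n.factorial : ℝ) * ‖δ^[n] A‖ ≤ 2 ^ (m-1) * ‖A‖ * r ^ n := by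
    intro n
    have hfacpos : (0:ℝ) < (n.factorial : ℝ) := by positivity
    have hm1pos : (0:ℝ) < ((m-1).factorial : ℝ) := by positivity
    have hc : ((m + n - 1).factorial : ℝ) / ((m - 1).factorial : ℝ)
        = ((m - 1 + n).choose n : ℝ) * (n.factorial : ℝ) := by
      have h := Nat.choose_mul_factorial_mul_factorial (Nat.le_add_left n (m-1))
      rw [Nat.add_sub_cancel] at h
      have hm1 : m + n - 1 = m - 1 + n := by omega
      rw [hm1, div_eq_iff (ne_of_gt hm1pos)]
      exact_mod_cast h.symm
    have hch : ((m - 1 + n).choose n : ℝ) ≤ 2 ^ (m - 1 + n) := by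
      exact_mod_cast (choose_le_two_pow' (m-1+n) n).trans_eq (by norm_num)
    have h1 := hbound n
    have hA : (0:ℝ) ≤ ‖A‖ := norm_nonneg A
    calc |t| ^ n / (n.factorial : ℝ) * ‖δ^[n] A‖
        ≤ |t| ^ n / (n.factorial : ℝ) * (2 ^ n * (((m + n - 1).factorial : ℝ) / ((m - 1).factorial : ℝ)) * V ^ n * ‖A‖) := by
          apply mul_le_mul_of_nonneg_left h1 (by positivity)
      _ = |t| ^ n * 2 ^ n * ((m - 1 + n).choose n : ℝ) * V ^ n * ‖A‖ := by
          rw [hc]; field_simp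
      _ ≤ |t| ^ n * 2 ^ n * (2 ^ (m - 1 + n) : ℝ) * V ^ n * ‖A‖ := by
          apply mul_le_mul_of_nonneg_right _ hA
          apply mul_le_mul_of_nonneg_right _ (by positivity)
          exact mul_le_mul_of_nonneg_left hch (by positivity)
      _ = 2 ^ (m-1) * ‖A‖ * r ^ n := by
          have h4n : (4:ℝ) ^ n = 2 ^ n * 2 ^ n := by rw [← mul_pow]; norm_num
          rw [pow_add, hrdef, mul_pow, mul_pow, h4n]; ring
  have hgeo : Summable fun n : ℕ => 2 ^ (m-1) * ‖A‖ * r ^ n :=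
    (summable_geometric_of_lt_one hr0 hr1).mul_left _
  have hnn : ∀ n : ℕ, 0 ≤ |t| ^ n / (n.factorial : ℝ) * ‖δ^[n] A‖ := fun n => by positivity
  have hsum : Summable fun n : ℕ => |t| ^ n / (n.factorial : ℝ) * ‖δ^[n] A‖ :=
    Summable.of_nonneg_of_le hnn key hgeo
  refine ⟨hsum, ?_⟩
  calc (∑' n : ℕ, |t| ^ n / (n.factorial : ℝ) * ‖δ^[n] A‖)
      ≤ ∑' n : ℕ, 2 ^ (m-1) * ‖A‖ * r ^ n := Summable.tsum_le_tsum key hsum hgeo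
    _ = 2 ^ (m-1) * ‖A‖ * (1 - r)⁻¹ := by
        rw [tsum_mul_left, tsum_geometric_of_lt_one hr0 hr1]
    _ = 2 ^ (m - 1) * ‖A‖ / (1 - 4 * |t| * V) := by rw [hrdef, div_eq_mul_inv]
end

section
/- Let h ∈ ℓ¹(ℤ^d) with Fourier transform ĥ, and let C be the bounded operator on ℓ²(ℤ^d) acting in Fourier representation as multiplication by Ĉ(k) = (1 + e^{ĥ(k)})^{−1}. For the cube Λ = ⟦−L,L⟧^d and h_Λ = 1_Λ h 1_Λ, one has lim_{L→∞} (1/|Λ|) Tr(C h_Λ) = ∫_{𝕋^d} ĥ(k)/(1 + e^{ĥ(k)}) dk/(2π)^d. -/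
open scoped BigOperators
open Complex Filter MeasureTheory
open scoped Topology

/-- The Brillouin zone `𝕋^d = [-π,π]^d`. -/
noncomputable def BZ (d : ℕ) : Set (Fin d → ℝ) :=
  Set.univ.pi fun _ => Set.Icc (-Real.pi) Real.pi

/-- The cube `Λ_L = ⟦-L,L⟧^d` in `ℤ^d`. -/
noncomputable def cube (d : ℕ) (L : ℤ) : Finset (Fin d → ℤ) :=
  Finset.Icc (fun _ => -L) (fun _ => L)

lemma aux_norm_exp_I_mul (r : ℝ) : ‖Complex.exp (Complex.I * (r : ℂ))‖ = 1 := by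
  rw [mul_comm]
  simp [Complex.norm_exp_ofReal_mul_I]

lemma aux_hhat_cont {d : ℕ} (h : (Fin d → ℤ) → ℂ) (hsum : Summable fun z => ‖h z‖)
    (hhat : (Fin d → ℝ) → ℝ)
    (hhat_def : ∀ k : Fin d → ℝ,
      (hhat k : ℂ)
        = ∑' x : Fin d → ℤ, h x * Complex.exp (-Complex.I * ∑ i, (k i : ℂ) * (x i : ℂ))) :
    Continuous hhat := by
  have hT : Continuous fun k : Fin d → ℝ =>
      ∑' x : Fin d → ℤ, h x * Complex.exp (-Complex.I * ∑ i, (k i : ℂ) * (x i : ℂ)) := by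
    apply continuous_tsum ?_ hsum ?_
    · intro x
      apply continuous_const.mul
      apply Complex.continuous_exp.comp
      apply continuous_const.mul
      apply continuous_finset_sum
      intro i _
      exact (Complex.continuous_ofReal.comp (continuous_apply i)).mul continuous_const
    · intro x k
      have he : (-Complex.I * ∑ i, (k i : ℂ) * (x i : ℂ))
          = Complex.I * ((-(∑ i, k i * (x i : ℝ)) : ℝ) : ℂ) := by
        push_cast
        ring
      rw [norm_mul, he, aux_norm_exp_I_mul, mul_one]
  exact (Complex.continuous_re.comp hT).congr fun k => by
    simp only [Function.comp_apply, ← hhat_def k, Complex.ofReal_re]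

lemma aux_cube_card (d : ℕ) (L : ℤ) : (cube d L).card = (2 * L + 1).toNat ^ d := by
  rw [cube, Pi.card_Icc]
  have : ∀ i : Fin d, (Finset.Icc (-L) L).card = (2 * L + 1).toNat := by
    intro i; rw [Int.card_Icc]; congr 1; ring
  rw [Finset.prod_congr rfl (fun i _ => this i), Finset.prod_const, Finset.card_univ,
    Fintype.card_fin]

lemma aux_cube_card_pos (d : ℕ) (L : ℕ) : 0 < (cube d (L : ℤ)).card := by
  apply Finset.card_pos.2
  refine ⟨fun _ => 0, ?_⟩
  rw [cube, Finset.mem_Icc]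
  constructor <;> intro i <;> simp

lemma aux_n_lower (d : ℕ) (z : Fin d → ℤ) (L : ℤ) (hLM : (∑ i, |z i|) ≤ L) :
    ((2 * L + 1 - 2 * ∑ i, |z i|).toNat) ^ d
      ≤ ((cube d L).filter (fun x => x + z ∈ cube d L)).card := by
  set M : ℤ := ∑ i, |z i| with hM
  have hsub : Finset.Icc (fun _ : Fin d => -L + M) (fun _ : Fin d => L - M)
      ⊆ (cube d L).filter (fun x => x + z ∈ cube d L) := by
    intro x hx
    rw [Finset.mem_Icc, Pi.le_def, Pi.le_def] at hx
    have hz : ∀ i, |z i| ≤ M := fun i =>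
      Finset.single_le_sum (f := fun i => |z i|) (fun j _ => abs_nonneg _) (Finset.mem_univ i)
    rw [Finset.mem_filter, cube, Finset.mem_Icc, Finset.mem_Icc, Pi.le_def, Pi.le_def,
      Pi.le_def, Pi.le_def]
    refine ⟨⟨fun i => ?_, fun i => ?_⟩, fun i => ?_, fun i => ?_⟩ <;>
      · have h1 := hx.1 i
        have h2 := hx.2 i
        have h3 := (abs_le.1 (hz i)).1
        have h4 := (abs_le.1 (hz i)).2
        simp -failIfUnchanged only [Pi.add_apply] at *
        omega
  calc ((2 * L + 1 - 2 * M).toNat) ^ d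
      = (Finset.Icc (fun _ : Fin d => -L + M) (fun _ : Fin d => L - M)).card := by
        rw [Pi.card_Icc]
        have : ∀ i : Fin d, (Finset.Icc (-L + M) (L - M)).card = (2 * L + 1 - 2 * M).toNat := by
          intro i; rw [Int.card_Icc]; congr 1; ring
        rw [Finset.prod_congr rfl (fun i _ => this i), Finset.prod_const, Finset.card_univ,
          Fintype.card_fin]
    _ ≤ _ := Finset.card_le_card hsub

lemma aux_ratio (d : ℕ) (z : Fin d → ℤ) :
    Tendsto (fun L : ℕ => ((((cube d (L:ℤ)).filter (fun x => x + z ∈ cube d (L:ℤ))).card : ℝ)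
      / ((cube d (L:ℤ)).card : ℝ))) atTop (𝓝 1) := by
  set M : ℤ := ∑ i, |z i| with hM
  have hM0 : 0 ≤ M := Finset.sum_nonneg fun i _ => abs_nonneg _
  have hb : ∀ L : ℕ, (0:ℝ) < 2 * (L:ℝ) + 1 := fun L => by positivity
  have hlo : Tendsto (fun L : ℕ => ((2*(L:ℝ)+1-2*(M:ℝ))/(2*(L:ℝ)+1))^d) atTop (𝓝 1) := by
    have h1 : Tendsto (fun L : ℕ => (2*(L:ℝ)+1)) atTop atTop := by
      apply tendsto_atTop_add_const_right
      exact (tendsto_natCast_atTop_atTop).const_mul_atTop two_pos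
    have h2 : Tendsto (fun L : ℕ => 1 - (2*(M:ℝ))/(2*(L:ℝ)+1)) atTop (𝓝 1) := by
      simpa using tendsto_const_nhds.sub (tendsto_const_nhds.div_atTop h1)
    have h3 : Tendsto (fun L : ℕ => (1 - (2*(M:ℝ))/(2*(L:ℝ)+1))^d) atTop (𝓝 1) := by
      simpa using h2.pow d
    apply h3.congr
    intro L
    have := (hb L).ne'
    field_simp
  apply tendsto_of_tendsto_of_tendsto_of_le_of_le' hlo tendsto_const_nhds
  · filter_upwards [eventually_ge_atTop M.toNat] with L hL
    have hLM : M ≤ (L:ℤ) := by omega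
    have h5 := aux_n_lower d z (L:ℤ) hLM
    have hcard := aux_cube_card d (L:ℤ)
    have hc1 : (((2 * (L:ℤ) + 1).toNat : ℝ)) = 2*(L:ℝ)+1 := by
      have h0 : (0:ℤ) ≤ 2*(L:ℤ)+1 := by omega
      exact_mod_cast Int.toNat_of_nonneg h0
    have hc2 : (((2 * (L:ℤ) + 1 - 2*M).toNat : ℝ)) = 2*(L:ℝ)+1-2*(M:ℝ) := by
      have h0 : (0:ℤ) ≤ 2*(L:ℤ)+1-2*M := by omega
      exact_mod_cast Int.toNat_of_nonneg h0
    have h6 : ((2*(L:ℝ)+1-2*(M:ℝ)))^d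
        ≤ (((cube d (L:ℤ)).filter (fun x => x + z ∈ cube d (L:ℤ))).card : ℝ) := by
      calc ((2*(L:ℝ)+1-2*(M:ℝ)))^d = (((2 * (L:ℤ) + 1 - 2*M).toNat : ℝ))^d := by rw [hc2]
        _ = ((((2 * (L:ℤ) + 1 - 2*M).toNat)^d : ℕ) : ℝ) := by push_cast; ring
        _ ≤ _ := by exact_mod_cast Nat.cast_le.2 h5
    have hcardR : ((cube d (L:ℤ)).card : ℝ) = (2*(L:ℝ)+1)^d := by
      rw [hcard]; push_cast [← hc1]; ring
    rw [div_pow, hcardR]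
    gcongr
  · filter_upwards with L
    apply div_le_one_of_le₀
    · exact_mod_cast Nat.cast_le.2 (Finset.card_filter_le _ _)
    · positivity

/-- Specific energy of the quadratic interaction: with `Ĉ = (1+e^{ĥ})⁻¹` and
`C(x,y) = ∫ Ĉ(k) e^{ik·(x-y)} dk/(2π)^d`,
`(1/|Λ|) Tr(C h_Λ) = (1/|Λ|) Σ_{x,y∈Λ} C(x,y) h(y-x)` converges to
`∫ ĥ(k)/(1+e^{ĥ(k)}) dk/(2π)^d`. -/
theorem stmt17 {d : ℕ} (h : (Fin d → ℤ) → ℂ) (hsum : Summable fun z => ‖h z‖)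
    (hhat : (Fin d → ℝ) → ℝ)
    (hhat_def : ∀ k : Fin d → ℝ,
      (hhat k : ℂ)
        = ∑' x : Fin d → ℤ, h x * Complex.exp (-Complex.I * ∑ i, (k i : ℂ) * (x i : ℂ)))
    (C : (Fin d → ℤ) → (Fin d → ℤ) → ℂ)
    (hC : ∀ x y : Fin d → ℤ,
      C x y = (1 / (2 * Real.pi) ^ d : ℂ) *
        ∫ k in BZ d, ((1 + Real.exp (hhat k))⁻¹ : ℂ) *
          Complex.exp (Complex.I * ∑ i, (k i : ℂ) * ((x i : ℂ) - (y i : ℂ)))) :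
    Tendsto
      (fun L : ℕ =>
        (1 / ((cube d L).card : ℂ)) *
          ∑ x ∈ cube d L, ∑ y ∈ cube d L, C x y * h (y - x))
      atTop
      (nhds ((1 / (2 * Real.pi) ^ d : ℂ) *
        ∫ k in BZ d, ((hhat k / (1 + Real.exp (hhat k)) : ℝ) : ℂ))) := by
  classical
  have hhc : Continuous hhat := aux_hhat_cont h hsum hhat hhat_def
  have hpos : ∀ k : Fin d → ℝ, (0:ℝ) < 1 + Real.exp (hhat k) := fun k => by positivity
  have hCrc : Continuous fun k : Fin d → ℝ => (1 + Real.exp (hhat k))⁻¹ :=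
    (continuous_const.add (Real.continuous_exp.comp hhc)).inv₀ fun k => (hpos k).ne'
  have hCr0 : ∀ k : Fin d → ℝ, 0 ≤ (1 + Real.exp (hhat k))⁻¹ := fun k => inv_nonneg.2 (hpos k).le
  have hCr1 : ∀ k : Fin d → ℝ, (1 + Real.exp (hhat k))⁻¹ ≤ 1 := fun k => by
    apply inv_le_one_of_one_le₀
    nlinarith [Real.exp_pos (hhat k)]
  have hCr_cast : ∀ k : Fin d → ℝ,
      ((1 + Real.exp (hhat k))⁻¹ : ℂ) = (((1 + Real.exp (hhat k))⁻¹ : ℝ) : ℂ) := by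
    intro k; push_cast; ring
  -- BZ facts
  have hBZc : IsCompact (BZ d) := isCompact_univ_pi fun _ => isCompact_Icc
  have hvolfin : volume (BZ d) < ⊤ := hBZc.measure_lt_top
  have hle : (fun _ : Fin d => -Real.pi) ≤ fun _ => Real.pi := by
    intro i; simp; linarith [Real.pi_pos]
  have hvol : (volume (BZ d)).toReal = (2 * Real.pi) ^ d := by
    rw [BZ, Set.pi_univ_Icc, Real.volume_Icc_pi_toReal hle]
    rw [Finset.prod_const, Finset.card_univ, Fintype.card_fin]
    ring_nf
  -- integrand facts
  have hcont : ∀ x y : Fin d → ℤ, Continuous fun k : Fin d → ℝ =>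
      ((1 + Real.exp (hhat k))⁻¹ : ℂ) *
        Complex.exp (Complex.I * ∑ i, (k i : ℂ) * ((x i : ℂ) - (y i : ℂ))) := by
    intro x y
    have h1 : Continuous fun k : Fin d → ℝ => ((1 + Real.exp (hhat k))⁻¹ : ℂ) := by
      simp only [hCr_cast]
      exact Complex.continuous_ofReal.comp hCrc
    apply h1.mul
    apply Complex.continuous_exp.comp
    apply continuous_const.mul
    apply continuous_finset_sum
    intro i _
    exact (Complex.continuous_ofReal.comp (continuous_apply i)).mul continuous_const
  have hnorm : ∀ (x y : Fin d → ℤ) (k : Fin d → ℝ),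
      ‖((1 + Real.exp (hhat k))⁻¹ : ℂ) *
        Complex.exp (Complex.I * ∑ i, (k i : ℂ) * ((x i : ℂ) - (y i : ℂ)))‖
      = (1 + Real.exp (hhat k))⁻¹ := by
    intro x y k
    have he : (Complex.I * ∑ i, (k i : ℂ) * ((x i : ℂ) - (y i : ℂ)))
        = Complex.I * ((∑ i, k i * ((x i : ℝ) - (y i : ℝ)) : ℝ) : ℂ) := by
      push_cast; ring
    rw [norm_mul, he, aux_norm_exp_I_mul, mul_one, hCr_cast, Complex.norm_real,
      Real.norm_eq_abs, _root_.abs_of_nonneg (hCr0 k)]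
  have hint : ∀ x y : Fin d → ℤ, IntegrableOn (fun k : Fin d → ℝ =>
      ((1 + Real.exp (hhat k))⁻¹ : ℂ) *
        Complex.exp (Complex.I * ∑ i, (k i : ℂ) * ((x i : ℂ) - (y i : ℂ)))) (BZ d) volume :=
    fun x y => (hcont x y).continuousOn.integrableOn_compact hBZc
  have hpd : (0:ℝ) < (2 * Real.pi) ^ d := by positivity
  have hCbound : ∀ x y : Fin d → ℤ, ‖C x y‖ ≤ 1 := by
    intro x y
    rw [hC x y, norm_mul]
    have h1 : ‖(1 / (2 * Real.pi) ^ d : ℂ)‖ = 1 / (2 * Real.pi) ^ d := by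
      rw [show (1 / (2 * Real.pi) ^ d : ℂ) = (((1 / (2 * Real.pi) ^ d : ℝ)) : ℂ) by push_cast; ring]
      rw [Complex.norm_real, Real.norm_eq_abs, _root_.abs_of_nonneg (by positivity : (0:ℝ) ≤ 1 / (2 * Real.pi) ^ d)]
    have h2 : ‖∫ k in BZ d, ((1 + Real.exp (hhat k))⁻¹ : ℂ) *
        Complex.exp (Complex.I * ∑ i, (k i : ℂ) * ((x i : ℂ) - (y i : ℂ)))‖
        ≤ 1 * (volume (BZ d)).toReal := by
      apply norm_setIntegral_le_of_norm_le_const hvolfin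
      · intro k _
        rw [hnorm x y k]
        exact hCr1 k
    calc ‖(1 / (2 * Real.pi) ^ d : ℂ)‖ * ‖_‖ ≤ (1 / (2 * Real.pi) ^ d) * (1 * (volume (BZ d)).toReal) := by
          rw [h1]; exact mul_le_mul_of_nonneg_left h2 (by positivity)
      _ = 1 := by rw [hvol]; field_simp
  -- shift invariance
  have hCshift : ∀ x y : Fin d → ℤ, C x y = C 0 (y - x) := by
    intro x y
    rw [hC x y, hC 0 (y - x)]
    have : ∀ k : Fin d → ℝ, (∑ i, (k i : ℂ) * ((x i : ℂ) - (y i : ℂ)))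
        = ∑ i, (k i : ℂ) * ((((0 : Fin d → ℤ)) i : ℂ) - (((y - x) i) : ℂ)) := by
      intro k
      apply Finset.sum_congr rfl
      intro i _
      simp only [Pi.sub_apply, Pi.zero_apply]
      push_cast
      ring
    simp_rw [this]
  -- the summand
  set F : (Fin d → ℤ) → ℂ := fun z => C 0 z * h z with hF
  have hFnorm : ∀ z, ‖F z‖ ≤ ‖h z‖ := fun z => by
    rw [hF, norm_mul]
    exact mul_le_of_le_one_left (norm_nonneg _) (hCbound 0 z)
  have hFsum : Summable fun z => ‖F z‖ :=
    Summable.of_nonneg_of_le (fun z => norm_nonneg _) hFnorm hsum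
  -- counting function
  set n : ℕ → (Fin d → ℤ) → ℕ :=
    fun L z => ((cube d (L:ℤ)).filter (fun x => x + z ∈ cube d (L:ℤ))).card with hn
  -- trace identity
  have key : ∀ L : ℕ, (∑ x ∈ cube d (L:ℤ), ∑ y ∈ cube d (L:ℤ), C x y * h (y - x))
      = ∑' z : Fin d → ℤ, (n L z : ℂ) * F z := by
    intro L
    have h1 : ∀ x ∈ cube d (L:ℤ), ∑ y ∈ cube d (L:ℤ), C x y * h (y - x)
        = ∑' z : Fin d → ℤ, (if x + z ∈ cube d (L:ℤ) then F z else 0) := by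
      intro x _
      rw [tsum_eq_sum (s := (cube d (L:ℤ)).image (fun y => y - x))
        (by
          intro z hz
          rw [if_neg]
          intro hmem
          exact hz (Finset.mem_image.2 ⟨x + z, hmem, by abel⟩))]
      rw [Finset.sum_image (by intro a _ b _ hab; simpa using hab)]
      apply Finset.sum_congr rfl
      intro y hy
      rw [show x + (y - x) = y by abel, if_pos hy, hCshift x y]
    rw [Finset.sum_congr rfl h1]
    have hsummand : ∀ x ∈ cube d (L:ℤ),
        Summable (fun z : Fin d → ℤ => (if x + z ∈ cube d (L:ℤ) then F z else 0)) := by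
      intro x _
      apply Summable.of_norm_bounded hFsum
      intro z
      split_ifs <;> simp [norm_nonneg]
    rw [← (hasSum_sum (fun x hx => (hsummand x hx).hasSum)).tsum_eq]
    apply tsum_congr
    intro z
    rw [← Finset.sum_filter, Finset.sum_const, nsmul_eq_mul]
  -- main convergence via dominated convergence for sums
  have hcpos : ∀ L : ℕ, (0:ℝ) < ((cube d (L:ℤ)).card : ℝ) := fun L => by
    exact_mod_cast aux_cube_card_pos d L
  have hmain : Tendsto (fun L : ℕ => ∑' z : Fin d → ℤ,
      (1 / ((cube d (L:ℤ)).card : ℂ)) * ((n L z : ℂ) * F z)) atTop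
      (𝓝 (∑' z : Fin d → ℤ, F z)) := by
    apply tendsto_tsum_of_dominated_convergence hFsum
    · intro z
      have h1 : Tendsto (fun L : ℕ => ((n L z : ℝ) / ((cube d (L:ℤ)).card : ℝ))) atTop (𝓝 1) :=
        aux_ratio d z
      have h2 : Tendsto (fun L : ℕ => (((n L z : ℝ) / ((cube d (L:ℤ)).card : ℝ) : ℝ) : ℂ))
          atTop (𝓝 ((1:ℝ):ℂ)) := (Complex.continuous_ofReal.tendsto 1).comp h1
      have h3 : Tendsto (fun L : ℕ => (((n L z : ℝ) / ((cube d (L:ℤ)).card : ℝ) : ℝ) : ℂ) * F z)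
          atTop (𝓝 (F z)) := by
        simpa using h2.mul_const (F z)
      apply h3.congr
      intro L
      push_cast
      ring
    · filter_upwards with L z
      have h1 : ‖(1 / ((cube d (L:ℤ)).card : ℂ)) * ((n L z : ℂ) * F z)‖
          = ((n L z : ℝ) / ((cube d (L:ℤ)).card : ℝ)) * ‖F z‖ := by
        rw [norm_mul, norm_mul, Complex.norm_natCast]
        rw [show (1 / ((cube d (L:ℤ)).card : ℂ)) = (((1 / ((cube d (L:ℤ)).card : ℝ)) : ℝ) : ℂ) by push_cast; ring]
        rw [Complex.norm_real, Real.norm_eq_abs,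
          _root_.abs_of_nonneg (div_nonneg zero_le_one (hcpos L).le : (0:ℝ) ≤ 1 / ((cube d (L:ℤ)).card : ℝ))]
        ring
      rw [h1]
      apply mul_le_of_le_one_left (norm_nonneg _)
      apply div_le_one_of_le₀
      · exact_mod_cast Nat.cast_le.2 (Finset.card_filter_le _ _)
      · exact (hcpos L).le
  -- identify the limit value
  have hval : (∑' z : Fin d → ℤ, F z) = (1 / (2 * Real.pi) ^ d : ℂ) *
      ∫ k in BZ d, ((hhat k / (1 + Real.exp (hhat k)) : ℝ) : ℂ) := by
    have hBZm : MeasurableSet (BZ d) := MeasurableSet.univ_pi fun _ => measurableSet_Icc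
    set G : (Fin d → ℤ) → (Fin d → ℝ) → ℂ := fun z k =>
      ((1 + Real.exp (hhat k))⁻¹ : ℂ) *
        Complex.exp (Complex.I * ∑ i, (k i : ℂ) * ((((0:Fin d → ℤ)) i : ℂ) - ((z i) : ℂ))) * h z
      with hG
    have step1 : ∀ z : Fin d → ℤ, F z = (1 / (2 * Real.pi) ^ d : ℂ) * ∫ k in BZ d, G z k := by
      intro z
      rw [hF]
      show C 0 z * h z = _
      rw [hC 0 z, mul_assoc, ← integral_mul_const]
    have hGint : ∀ z : Fin d → ℤ, Integrable (G z) (volume.restrict (BZ d)) :=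
      fun z => (hint 0 z).mul_const (h z)
    have hGnorm : ∀ (z : Fin d → ℤ) (k : Fin d → ℝ),
        ‖G z k‖ = (1 + Real.exp (hhat k))⁻¹ * ‖h z‖ := by
      intro z k
      rw [hG]
      show ‖_ * Complex.exp _ * h z‖ = _
      rw [norm_mul, hnorm 0 z k]
    have hGbound : ∀ z : Fin d → ℤ, (∫ k in BZ d, ‖G z k‖) ≤ (volume (BZ d)).toReal * ‖h z‖ := by
      intro z
      have h1 : ∫ k in BZ d, ‖G z k‖ ≤ ∫ _k in BZ d, ‖h z‖ := by
        apply setIntegral_mono_on (hGint z).norm (integrableOn_const hvolfin.ne) hBZm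
        intro k _
        rw [hGnorm z k]
        exact mul_le_of_le_one_left (norm_nonneg _) (hCr1 k)
      calc (∫ k in BZ d, ‖G z k‖) ≤ ∫ _k in BZ d, ‖h z‖ := h1
        _ = (volume (BZ d)).toReal * ‖h z‖ := by rw [setIntegral_const, smul_eq_mul]; rfl
    have hGsum : Summable fun z : Fin d → ℤ => ∫ k in BZ d, ‖G z k‖ :=
      Summable.of_nonneg_of_le
        (fun z => integral_nonneg fun k => norm_nonneg _) hGbound (hsum.mul_left _)
    have step2 : (∑' z : Fin d → ℤ, ∫ k in BZ d, G z k) = ∫ k in BZ d, ∑' z : Fin d → ℤ, G z k :=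
      integral_tsum_of_summable_integral_norm hGint hGsum
    have step3 : ∀ k : Fin d → ℝ,
        (∑' z : Fin d → ℤ, G z k) = ((hhat k / (1 + Real.exp (hhat k)) : ℝ) : ℂ) := by
      intro k
      have hex : ∀ z : Fin d → ℤ,
          (Complex.I * ∑ i, (k i : ℂ) * ((((0:Fin d → ℤ)) i : ℂ) - ((z i) : ℂ)))
            = -Complex.I * ∑ i, (k i : ℂ) * ((z i) : ℂ) := by
        intro z
        have : (∑ i, (k i : ℂ) * ((((0:Fin d → ℤ)) i : ℂ) - ((z i) : ℂ)))
            = -∑ i, (k i : ℂ) * ((z i) : ℂ) := by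
          rw [← Finset.sum_neg_distrib]
          apply Finset.sum_congr rfl
          intro i _
          simp only [Pi.zero_apply, Int.cast_zero]
          ring
        rw [this]
        ring
      have h1 : (∑' z : Fin d → ℤ, G z k)
          = ((1 + Real.exp (hhat k))⁻¹ : ℂ) *
            ∑' z : Fin d → ℤ, h z * Complex.exp (-Complex.I * ∑ i, (k i : ℂ) * ((z i) : ℂ)) := by
        rw [← tsum_mul_left]
        apply tsum_congr
        intro z
        rw [hG]
        show _ * Complex.exp _ * h z = _
        rw [hex z]
        ring
      rw [h1, ← hhat_def k, hCr_cast, ← Complex.ofReal_mul, inv_mul_eq_div]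
    have hfin : (fun k : Fin d → ℝ => ∑' z : Fin d → ℤ, G z k)
        = fun k => ((hhat k / (1 + Real.exp (hhat k)) : ℝ) : ℂ) := funext step3
    calc (∑' z : Fin d → ℤ, F z)
        = ∑' z : Fin d → ℤ, (1 / (2 * Real.pi) ^ d : ℂ) * ∫ k in BZ d, G z k :=
          tsum_congr step1
      _ = (1 / (2 * Real.pi) ^ d : ℂ) * ∑' z : Fin d → ℤ, ∫ k in BZ d, G z k := tsum_mul_left
      _ = _ := by rw [step2, hfin]
  have hfun : ∀ L : ℕ, (1 / ((cube d (L:ℤ)).card : ℂ)) *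
      ∑ x ∈ cube d (L:ℤ), ∑ y ∈ cube d (L:ℤ), C x y * h (y - x)
      = ∑' z : Fin d → ℤ, (1 / ((cube d (L:ℤ)).card : ℂ)) * ((n L z : ℂ) * F z) := by
    intro L
    rw [key L, tsum_mul_left]
  rw [← hval]
  exact hmain.congr fun L => (hfun L).symm
end
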